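/- Fix \(a > 0\), \(T > 0\), and let \(f : \mathbb{R} \to \mathbb{R}\) be a continuously differentiable function with bounded derivative such that \(C_0 := \sup_{x \in \mathbb{R}} (1+x^2)^a\, |f(x)| < \infty\). Then there exists a constant \(C_1 > 0\), depending only on a, T, and \(C_0\), such that for all \(0 < t \le T\) and all \(x \in \mathbb{R}\): \(|(H_t * f)(x)| \le \dfrac{C_1}{(1+x^2)^a}\) and \(|(H_t * f')(x)| \le \dfrac{C_1}{\sqrt{t}\,(1+x^2)^a}\). -/

import Mathlib

/-!
Peetre's inequality `1 + x² ≤ 2 (1 + (x - z)²) (1 + z²)` moves the weight through a convolution: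
if `|f| ≤ C₀ (1 + ·²)⁻ᵃ`, then `|(g * f)(x)| ≤ 2ᵃ C₀ (1 + x²)⁻ᵃ ∫ |g y| (1 + y²)ᵃ dy`.
For `t ≤ T` the weight is at most `M exp (y² / 16t)`, which the Gaussian absorbs:
`H_t(y) (1 + y²)ᵃ ≤ √2 M H_{2t}(y)`, so the weighted moment of `H_t` is bounded uniformly in `t`.
For `f'`, integrate by parts onto `∂_z H_t(x - z) = (x - z)/(2t) H_t(x - z)`; its weighted moment is
`O(t^{-1/2})` because `|y| ≤ √(8t) exp (y² / 16t)`.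
-/

/-- The one-dimensional heat kernel `H_t(x) = (4πt)^(-1/2) exp(-x²/(4t))`. -/
noncomputable def heatKernel (t x : ℝ) : ℝ :=
  (4 * Real.pi * t) ^ (-(1 : ℝ) / 2) * Real.exp (-x ^ 2 / (4 * t))

open MeasureTheory Real

lemma one_add_sq_le_two_mul (x z : ℝ) : 1 + x ^ 2 ≤ 2 * (1 + (x - z) ^ 2) * (1 + z ^ 2) := by
  nlinarith [sq_nonneg (x - 2 * z), sq_nonneg ((x - z) * z)]

lemma one_add_sq_rpow_le_mul (x z : ℝ) {a : ℝ} (ha : 0 ≤ a) :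
    (1 + x ^ 2) ^ a ≤ 2 ^ a * (1 + (x - z) ^ 2) ^ a * (1 + z ^ 2) ^ a := by
  rw [← mul_rpow (by norm_num) (by positivity), ← mul_rpow (by positivity) (by positivity)]
  exact rpow_le_rpow (by positivity) (one_add_sq_le_two_mul x z) ha

lemma continuous_one_add_sq_rpow (a : ℝ) : Continuous fun y : ℝ => (1 + y ^ 2) ^ a :=
  (continuous_const.add (continuous_pow 2)).rpow_const fun y =>
    Or.inl (by positivity : (0 : ℝ) < 1 + y ^ 2).ne'

lemma exists_one_add_rpow_le_mul_exp {a c : ℝ} (ha : 0 < a) (hc : 0 < c) :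
    ∃ M, 0 < M ∧ ∀ u, 0 ≤ u → (1 + u) ^ a ≤ M * exp (c * u) := by
  set L := max 1 (a / c)
  have hL : 0 < L := lt_max_of_lt_left one_pos
  refine ⟨L ^ a, by positivity, fun u hu => ?_⟩
  have hlin : 1 + u ≤ L * exp (c * u / a) := by
    have h1 : 1 ≤ L := le_max_left _ _
    have h2 : a / c ≤ L := le_max_right _ _
    have h3 : u ≤ L * (c * u / a) := by
      rw [div_le_iff₀ hc] at h2
      rw [mul_div_assoc', le_div_iff₀ ha]
      nlinarith
    nlinarith [add_one_le_exp (c * u / a)]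
  calc (1 + u) ^ a ≤ (L * exp (c * u / a)) ^ a := rpow_le_rpow (by positivity) hlin ha.le
    _ = L ^ a * exp (c * u) := by
      rw [mul_rpow hL.le (exp_pos _).le, ← exp_mul, div_mul_cancel₀ _ ha.ne']

lemma exists_one_add_sq_rpow_le_mul_exp {a T : ℝ} (ha : 0 < a) (hT : 0 < T) :
    ∃ M, 0 < M ∧ ∀ t, 0 < t → t ≤ T → ∀ y, (1 + y ^ 2) ^ a ≤ M * exp (y ^ 2 / (16 * t)) := by
  obtain ⟨M, hM, hMu⟩ := exists_one_add_rpow_le_mul_exp ha (inv_pos.2 (by positivity : 0 < 16 * T))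
  refine ⟨M, hM, fun t ht htT y => (hMu _ (sq_nonneg y)).trans ?_⟩
  gcongr
  rw [inv_mul_eq_div]
  gcongr

lemma abs_le_sqrt_mul_exp (y : ℝ) {b : ℝ} (hb : 0 < b) : |y| ≤ √b * exp (y ^ 2 / (2 * b)) := by
  have hsb : 0 < √b := sqrt_pos.mpr hb
  set s := |y| / √b
  have hy : |y| = √b * s := (mul_div_cancel₀ _ hsb.ne').symm
  have hs2 : s ^ 2 = y ^ 2 / b := by rw [div_pow, sq_abs, sq_sqrt hb.le]
  have hs : s ≤ exp (s ^ 2 / 2) := by nlinarith [add_one_le_exp (s ^ 2 / 2), sq_nonneg (s - 1)]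
  calc |y| = √b * s := hy
    _ ≤ √b * exp (s ^ 2 / 2) := by gcongr
    _ = √b * exp (y ^ 2 / (2 * b)) := by rw [hs2, div_div, mul_comm b]

lemma heatKernel_eq {t : ℝ} (ht : 0 ≤ t) (y : ℝ) :
    heatKernel t y = exp (-y ^ 2 / (4 * t)) / √(4 * π * t) := by
  rw [heatKernel, neg_div, rpow_neg (by positivity), ← sqrt_eq_rpow]
  ring

lemma heatKernel_nonneg {t : ℝ} (ht : 0 ≤ t) (y : ℝ) : 0 ≤ heatKernel t y := by
  rw [heatKernel_eq ht]; positivity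

lemma abs_heatKernel {t : ℝ} (ht : 0 ≤ t) (y : ℝ) : |heatKernel t y| = heatKernel t y :=
  abs_of_nonneg (heatKernel_nonneg ht y)

lemma abs_div_mul_heatKernel {t : ℝ} (ht : 0 < t) (y : ℝ) :
    |y / (2 * t) * heatKernel t y| = heatKernel t y * (|y| / (2 * t)) := by
  rw [abs_mul, abs_div, abs_of_pos (by positivity : 0 < 2 * t), abs_heatKernel ht.le, mul_comm]

lemma exp_neg_sq_div (b y : ℝ) : exp (-y ^ 2 / b) = exp (-b⁻¹ * y ^ 2) := by
  ring_nf

lemma integrable_heatKernel {t : ℝ} (ht : 0 < t) : Integrable (heatKernel t) := by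
  have h := (integrable_exp_neg_mul_sq (inv_pos.mpr (by positivity : 0 < 4 * t))).div_const
    √(4 * π * t)
  refine h.congr (Filter.Eventually.of_forall fun y => ?_)
  simp only [heatKernel_eq ht.le, exp_neg_sq_div]

lemma integral_heatKernel {t : ℝ} (ht : 0 < t) : ∫ y, heatKernel t y = 1 := by
  simp only [heatKernel_eq ht.le, exp_neg_sq_div]
  rw [integral_div, integral_gaussian, div_inv_eq_mul, div_eq_one_iff_eq (by positivity)]
  ring_nf

lemma heatKernel_mul_exp {t : ℝ} (ht : 0 < t) (y : ℝ) :
    heatKernel t y * exp (y ^ 2 / (8 * t)) = √2 * heatKernel (2 * t) y := by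
  rw [heatKernel_eq ht.le, heatKernel_eq (by positivity), div_mul_eq_mul_div, ← exp_add,
    show 4 * π * (2 * t) = 2 * (4 * π * t) by ring, sqrt_mul zero_le_two]
  field_simp
  ring_nf

lemma hasDerivAt_heatKernel (t y : ℝ) :
    HasDerivAt (heatKernel t) (-(y / (2 * t)) * heatKernel t y) y := by
  have h : HasDerivAt (fun y : ℝ => -y ^ 2 / (4 * t)) (-(2 * y) / (4 * t)) y := by
    simpa using (hasDerivAt_pow 2 y).neg.div_const (4 * t)
  replace h := h.exp.const_mul ((4 * π * t) ^ (-(1 : ℝ) / 2))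
  refine h.congr_deriv ?_
  rw [heatKernel]
  field_simp
  ring

lemma continuous_heatKernel (t : ℝ) : Continuous (heatKernel t) :=
  continuous_iff_continuousAt.2 fun y => (hasDerivAt_heatKernel t y).continuousAt

lemma heatKernel_mul_le {t K : ℝ} (ht : 0 < t) {ψ : ℝ → ℝ}
    (hψK : ∀ y, ψ y ≤ K * exp (y ^ 2 / (8 * t))) (y : ℝ) :
    heatKernel t y * ψ y ≤ √2 * K * heatKernel (2 * t) y := by
  calc heatKernel t y * ψ y ≤ heatKernel t y * (K * exp (y ^ 2 / (8 * t))) :=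
        mul_le_mul_of_nonneg_left (hψK y) (heatKernel_nonneg ht.le y)
    _ = √2 * K * heatKernel (2 * t) y := by
        rw [mul_left_comm, heatKernel_mul_exp ht]; ring

lemma integrable_heatKernel_mul {t K : ℝ} (ht : 0 < t) {ψ : ℝ → ℝ} (hψ : Continuous ψ)
    (hψ₀ : ∀ y, 0 ≤ ψ y) (hψK : ∀ y, ψ y ≤ K * exp (y ^ 2 / (8 * t))) :
    Integrable fun y => heatKernel t y * ψ y := by
  refine ((integrable_heatKernel (by positivity : 0 < 2 * t)).const_mul (√2 * K)).mono' ?_ ?_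
  · exact ((continuous_heatKernel t).mul hψ).aestronglyMeasurable
  · refine Filter.Eventually.of_forall fun y => ?_
    rw [Real.norm_of_nonneg (mul_nonneg (heatKernel_nonneg ht.le y) (hψ₀ y))]
    exact heatKernel_mul_le ht hψK y

lemma integral_heatKernel_mul_le {t K : ℝ} (ht : 0 < t) {ψ : ℝ → ℝ} (hψ₀ : ∀ y, 0 ≤ ψ y)
    (hψK : ∀ y, ψ y ≤ K * exp (y ^ 2 / (8 * t))) :
    ∫ y, heatKernel t y * ψ y ≤ √2 * K := by
  calc ∫ y, heatKernel t y * ψ y ≤ ∫ y, √2 * K * heatKernel (2 * t) y :=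
        integral_mono_of_nonneg
          (Filter.Eventually.of_forall fun y => mul_nonneg (heatKernel_nonneg ht.le y) (hψ₀ y))
          ((integrable_heatKernel (by positivity)).const_mul _)
          (Filter.Eventually.of_forall (heatKernel_mul_le ht hψK))
    _ = √2 * K := by rw [integral_const_mul, integral_heatKernel (by positivity), mul_one]

lemma nonneg_of_abs_le_div_weight {a C : ℝ} {f : ℝ → ℝ}
    (hf : ∀ z, |f z| ≤ C / (1 + z ^ 2) ^ a) : 0 ≤ C := by
  have := (abs_nonneg _).trans (hf 0)
  rwa [le_div_iff₀ (by positivity), zero_mul] at this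

lemma abs_comp_sub_mul_le {a C : ℝ} (ha : 0 ≤ a) {f : ℝ → ℝ}
    (hf : ∀ z, |f z| ≤ C / (1 + z ^ 2) ^ a) (g : ℝ → ℝ) (x z : ℝ) :
    |g (x - z) * f z| ≤ C * 2 ^ a / (1 + x ^ 2) ^ a * (|g (x - z)| * (1 + (x - z) ^ 2) ^ a) := by
  have hC := nonneg_of_abs_le_div_weight hf
  have hfz : |f z| ≤ C * 2 ^ a / (1 + x ^ 2) ^ a * (1 + (x - z) ^ 2) ^ a := by
    refine (hf z).trans ?_
    rw [div_mul_eq_mul_div, div_le_div_iff₀ (by positivity) (by positivity)]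
    calc C * (1 + x ^ 2) ^ a ≤ C * (2 ^ a * (1 + (x - z) ^ 2) ^ a * (1 + z ^ 2) ^ a) :=
          mul_le_mul_of_nonneg_left (one_add_sq_rpow_le_mul x z ha) hC
      _ = _ := by ring
  calc |g (x - z) * f z| = |g (x - z)| * |f z| := abs_mul _ _
    _ ≤ |g (x - z)| * (C * 2 ^ a / (1 + x ^ 2) ^ a * (1 + (x - z) ^ 2) ^ a) := by gcongr
    _ = _ := by ring

lemma integrable_comp_sub_mul {a C : ℝ} (ha : 0 ≤ a) {f g : ℝ → ℝ}
    (hf : ∀ z, |f z| ≤ C / (1 + z ^ 2) ^ a) (hfm : AEStronglyMeasurable f) (hg : Continuous g)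
    (hgw : Integrable fun y => |g y| * (1 + y ^ 2) ^ a) (x : ℝ) :
    Integrable fun z => g (x - z) * f z :=
  ((hgw.comp_sub_left x).const_mul _).mono'
    ((hg.comp (continuous_sub_left x)).aestronglyMeasurable.mul hfm)
    (Filter.Eventually.of_forall (abs_comp_sub_mul_le ha hf g x))

lemma abs_integral_comp_sub_mul_le {a C : ℝ} (ha : 0 ≤ a) {f g : ℝ → ℝ}
    (hf : ∀ z, |f z| ≤ C / (1 + z ^ 2) ^ a)
    (hgw : Integrable fun y => |g y| * (1 + y ^ 2) ^ a) (x : ℝ) :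
    |∫ z, g (x - z) * f z| ≤ C * 2 ^ a / (1 + x ^ 2) ^ a * ∫ y, |g y| * (1 + y ^ 2) ^ a := by
  calc |∫ z, g (x - z) * f z| ≤ ∫ z, |g (x - z) * f z| := abs_integral_le_integral_abs
    _ ≤ ∫ z, C * 2 ^ a / (1 + x ^ 2) ^ a * (|g (x - z)| * (1 + (x - z) ^ 2) ^ a) :=
        integral_mono_of_nonneg (Filter.Eventually.of_forall fun z => abs_nonneg _)
          ((hgw.comp_sub_left x).const_mul _)
          (Filter.Eventually.of_forall (abs_comp_sub_mul_le ha hf g x))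
    _ = _ := by
        rw [integral_const_mul, integral_sub_left_eq_self (fun y => |g y| * (1 + y ^ 2) ^ a)]

lemma integral_heatKernel_sub_mul_deriv {t x : ℝ} {f : ℝ → ℝ} (hf : Differentiable ℝ f)
    (h₁ : Integrable fun z => heatKernel t (x - z) * deriv f z)
    (h₂ : Integrable fun z => (x - z) / (2 * t) * heatKernel t (x - z) * f z)
    (h₃ : Integrable fun z => heatKernel t (x - z) * f z) :
    ∫ z, heatKernel t (x - z) * deriv f z =
      -∫ z, (x - z) / (2 * t) * heatKernel t (x - z) * f z := by
  refine integral_mul_deriv_eq_deriv_mul_of_integrable (fun z _ => ?_)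
    (fun z _ => (hf z).hasDerivAt) h₁ h₂ h₃
  have h := (hasDerivAt_heatKernel t (x - z)).comp z ((hasDerivAt_id z).const_sub x)
  exact h.congr_deriv (by ring)

section KernelMoments

variable {a t M : ℝ} (ht : 0 < t) (hM : ∀ y, (1 + y ^ 2) ^ a ≤ M * exp (y ^ 2 / (16 * t)))
include ht hM

lemma one_add_sq_rpow_le_mul_exp (y : ℝ) : (1 + y ^ 2) ^ a ≤ M * exp (y ^ 2 / (8 * t)) := by
  have hM₀ : 0 ≤ M := by have := hM 0; norm_num at this; linarith
  refine (hM y).trans ?_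
  gcongr
  linarith

lemma abs_div_mul_one_add_sq_rpow_le (y : ℝ) :
    |y| / (2 * t) * (1 + y ^ 2) ^ a ≤ √2 / √t * M * exp (y ^ 2 / (8 * t)) := by
  have hy := abs_le_sqrt_mul_exp y (by positivity : 0 < 8 * t)
  rw [show 2 * (8 * t) = 16 * t by ring] at hy
  have h8 : √(8 * t) = 2 * √2 * √t := by
    rw [sqrt_mul (by norm_num), show (8 : ℝ) = 2 ^ 2 * 2 by norm_num, sqrt_mul (by norm_num),
      sqrt_sq zero_le_two]
  have hexp : exp (y ^ 2 / (16 * t)) * exp (y ^ 2 / (16 * t)) = exp (y ^ 2 / (8 * t)) := by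
    rw [← exp_add]; congr 1; field_simp; ring
  calc |y| / (2 * t) * (1 + y ^ 2) ^ a
      ≤ √(8 * t) * exp (y ^ 2 / (16 * t)) / (2 * t) * (M * exp (y ^ 2 / (16 * t))) := by
        gcongr
        exact hM y
    _ = √2 / √t * M * exp (y ^ 2 / (8 * t)) := by
        have : 0 < √t := sqrt_pos.2 ht
        rw [h8, ← hexp]
        field_simp
        rw [sq_sqrt ht.le]

lemma integrable_abs_heatKernel_mul_weight :
    Integrable fun y => |heatKernel t y| * (1 + y ^ 2) ^ a := by
  simp only [abs_heatKernel ht.le]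
  exact integrable_heatKernel_mul ht (continuous_one_add_sq_rpow a) (fun y => by positivity)
    (one_add_sq_rpow_le_mul_exp ht hM)

lemma integral_abs_heatKernel_mul_weight_le :
    ∫ y, |heatKernel t y| * (1 + y ^ 2) ^ a ≤ √2 * M := by
  simp only [abs_heatKernel ht.le]
  exact integral_heatKernel_mul_le ht (fun y => by positivity) (one_add_sq_rpow_le_mul_exp ht hM)

lemma integrable_abs_div_mul_heatKernel_mul_weight :
    Integrable fun y => |y / (2 * t) * heatKernel t y| * (1 + y ^ 2) ^ a := by
  simp only [abs_div_mul_heatKernel ht, mul_assoc]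
  exact integrable_heatKernel_mul ht
    ((continuous_abs.div_const _).mul (continuous_one_add_sq_rpow a)) (fun y => by positivity)
    (abs_div_mul_one_add_sq_rpow_le ht hM)

lemma integral_abs_div_mul_heatKernel_mul_weight_le :
    ∫ y, |y / (2 * t) * heatKernel t y| * (1 + y ^ 2) ^ a ≤ 2 * M / √t := by
  simp only [abs_div_mul_heatKernel ht, mul_assoc]
  refine (integral_heatKernel_mul_le ht (fun y => by positivity)
    (abs_div_mul_one_add_sq_rpow_le ht hM)).trans_eq ?_
  rw [← mul_assoc, mul_div_assoc', mul_self_sqrt zero_le_two]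
  ring

lemma abs_integral_heatKernel_sub_mul_le {C : ℝ} (ha : 0 ≤ a) {f : ℝ → ℝ}
    (hf : ∀ z, |f z| ≤ C / (1 + z ^ 2) ^ a) (x : ℝ) :
    |∫ z, heatKernel t (x - z) * f z| ≤ C * 2 ^ a / (1 + x ^ 2) ^ a * (√2 * M) := by
  have hC := nonneg_of_abs_le_div_weight hf
  refine (abs_integral_comp_sub_mul_le ha hf
    (integrable_abs_heatKernel_mul_weight ht hM) x).trans ?_
  gcongr
  exact integral_abs_heatKernel_mul_weight_le ht hM

lemma abs_integral_heatKernel_sub_mul_deriv_le {C B : ℝ} (ha : 0 ≤ a) {f : ℝ → ℝ}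
    (hf : ContDiff ℝ 1 f) (hB : ∀ z, |deriv f z| ≤ B) (hfC : ∀ z, |f z| ≤ C / (1 + z ^ 2) ^ a)
    (x : ℝ) :
    |∫ z, heatKernel t (x - z) * deriv f z| ≤ C * 2 ^ a / (1 + x ^ 2) ^ a * (2 * M / √t) := by
  have hfm : AEStronglyMeasurable f := hf.continuous.aestronglyMeasurable
  have h₁ : Integrable fun z => heatKernel t (x - z) * deriv f z :=
    ((integrable_heatKernel ht).comp_sub_left x).mul_bdd
      (hf.continuous_deriv le_rfl).aestronglyMeasurable (Filter.Eventually.of_forall hB)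
  have h₂ := integrable_comp_sub_mul ha hfC hfm
    ((continuous_id.div_const _).mul (continuous_heatKernel t))
    (integrable_abs_div_mul_heatKernel_mul_weight ht hM) x
  have h₃ := integrable_comp_sub_mul ha hfC hfm (continuous_heatKernel t)
    (integrable_abs_heatKernel_mul_weight ht hM) x
  have hC := nonneg_of_abs_le_div_weight hfC
  rw [integral_heatKernel_sub_mul_deriv (hf.differentiable one_ne_zero) h₁ h₂ h₃, abs_neg]
  refine (abs_integral_comp_sub_mul_le ha hfC
    (integrable_abs_div_mul_heatKernel_mul_weight ht hM) x).trans ?_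
  gcongr
  exact integral_abs_div_mul_heatKernel_mul_weight_le ht hM

end KernelMoments

/-- Spatial decay for the heat semigroup: given `a > 0`, `T > 0` and `C₀`, there is a
constant `C₁ > 0` depending only on `a`, `T`, `C₀` such that for every continuously
differentiable `f` with bounded derivative satisfying `(1+x²)^a |f(x)| ≤ C₀` for all `x`,
one has for all `0 < t ≤ T` and all `x`:
`|(H_t * f)(x)| ≤ C₁ (1+x²)^(-a)` and `|(H_t * f')(x)| ≤ C₁ t^(-1/2) (1+x²)^(-a)`. -/
theorem heatKernel_weighted_bounds (a T C₀ : ℝ) (ha : 0 < a) (hT : 0 < T) :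
    ∃ C₁ : ℝ, 0 < C₁ ∧
      ∀ f : ℝ → ℝ, ContDiff ℝ 1 f →
        (∃ B : ℝ, ∀ x : ℝ, |deriv f x| ≤ B) →
        (∀ x : ℝ, (1 + x ^ 2) ^ a * |f x| ≤ C₀) →
        ∀ t x : ℝ, 0 < t → t ≤ T →
          |∫ z : ℝ, heatKernel t (x - z) * f z| ≤ C₁ / (1 + x ^ 2) ^ a ∧
            |∫ z : ℝ, heatKernel t (x - z) * deriv f z| ≤
              C₁ / (Real.sqrt t * (1 + x ^ 2) ^ a) := by
  obtain ⟨M, hM₀, hM⟩ := exists_one_add_sq_rpow_le_mul_exp ha hT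
  refine ⟨2 * 2 ^ a * M * max C₀ 1, by positivity, ?_⟩
  rintro f hf ⟨B, hB⟩ hfC t x ht htT
  have hfw : ∀ z, |f z| ≤ C₀ / (1 + z ^ 2) ^ a := fun z =>
    (le_div_iff₀' (by positivity)).2 (hfC z)
  have hC₀ := nonneg_of_abs_le_div_weight hfw
  constructor
  · calc |∫ z, heatKernel t (x - z) * f z|
        ≤ C₀ * 2 ^ a / (1 + x ^ 2) ^ a * (√2 * M) :=
          abs_integral_heatKernel_sub_mul_le ht (hM t ht htT) ha.le hfw x
      _ = √2 * 2 ^ a * M * C₀ / (1 + x ^ 2) ^ a := by ring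
      _ ≤ _ := by
          gcongr
          · exact sqrt_le_iff.2 ⟨zero_le_two, by norm_num⟩
          · exact le_max_left _ _
  · calc |∫ z, heatKernel t (x - z) * deriv f z|
        ≤ C₀ * 2 ^ a / (1 + x ^ 2) ^ a * (2 * M / √t) :=
          abs_integral_heatKernel_sub_mul_deriv_le ht (hM t ht htT) ha.le hf hB hfw x
      _ = 2 * 2 ^ a * M * C₀ / (√t * (1 + x ^ 2) ^ a) := by ring
      _ ≤ _ := by gcongr; exact le_max_left _ _
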